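/- arXiv:1501.07366 — 6 statements merged into one kernel-verified Lean document; each statement's English description precedes it below -/
import Mathlib

section
/- Let G be a group, Y a central subgroup of G contained in a normal subgroup X of G. Then the group of all automorphisms of G that restrict to the identity on X and induce the identity on G/Y is isomorphic to Hom(G/X, Y). -/
open scoped IsMulCommutative

/-!
For `α ∈ S`, `g ↦ g⁻¹ * α g` is a homomorphism `G → Y` because `Y` is central, and it kills `X`
because `α` fixes `X`; it is multiplicative in `α` because `α` fixes `Y ≤ X`.
Conversely a homomorphism `φ : G ⧸ X →* Y` gives the automorphism `g ↦ g * φ g`, whose inverse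
is `g ↦ g * (φ g)⁻¹` since `φ` is constant on cosets of `X ⊇ Y`.
-/

namespace MulAut

variable {G : Type*} [Group G] {X Y : Subgroup G}

theorem inv_mul_apply_mul (α : MulAut G) {g : G} (hg : g⁻¹ * α g ∈ Subgroup.center G) (h : G) :
    (g * h)⁻¹ * α (g * h) = (g⁻¹ * α g) * (h⁻¹ * α h) := by
  have hcomm : h⁻¹ * (g⁻¹ * α g) = (g⁻¹ * α g) * h⁻¹ := Subgroup.mem_center_iff.mp hg h⁻¹
  calc (g * h)⁻¹ * α (g * h) = h⁻¹ * (g⁻¹ * α g) * α h := by simp [mul_assoc]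
    _ = _ := by rw [hcomm, mul_assoc]

theorem inv_mul_mul_apply (α β : MulAut G) (g : G) (hα : α (g⁻¹ * β g) = g⁻¹ * β g) :
    g⁻¹ * (α * β) g = (g⁻¹ * α g) * (g⁻¹ * β g) := by
  have hβg : β g = g * (g⁻¹ * β g) := by group
  calc g⁻¹ * α (β g) = g⁻¹ * (α g * α (g⁻¹ * β g)) := by rw [← map_mul, ← hβg]
    _ = (g⁻¹ * α g) * (g⁻¹ * β g) := by rw [hα, mul_assoc]

def displacement (hYZ : Y ≤ Subgroup.center G) (α : MulAut G) (hα : ∀ g, g⁻¹ * α g ∈ Y) :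
    G →* Y where
  toFun g := ⟨g⁻¹ * α g, hα g⟩
  map_one' := by simp
  map_mul' g h := Subtype.ext (inv_mul_apply_mul α (hYZ (hα g)) h)

@[simp]
theorem coe_displacement_apply (hYZ : Y ≤ Subgroup.center G) (α : MulAut G)
    (hα : ∀ g, g⁻¹ * α g ∈ Y) (g : G) : (displacement hYZ α hα g : G) = g⁻¹ * α g :=
  rfl

theorem displacement_eq_one (hYZ : Y ≤ Subgroup.center G) (α : MulAut G)
    (hα : ∀ g, g⁻¹ * α g ∈ Y) {x : G} (hx : α x = x) : displacement hYZ α hα x = 1 :=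
  Subtype.ext (by simp [hx])

def ofCentralHom [X.Normal] (hYZ : Y ≤ Subgroup.center G) (hYX : Y ≤ X) (φ : G ⧸ X →* Y) :
    MulAut G where
  toFun g := g * φ g
  invFun g := g * (φ g)⁻¹
  left_inv g := by simp [(QuotientGroup.eq_one_iff _).mpr (hYX (φ g).2), mul_assoc]
  right_inv g := by simp [(QuotientGroup.eq_one_iff _).mpr (hYX (φ g).2), mul_assoc]
  map_mul' g h := by
    have hcomm : (φ g : G) * h = h * φ g := (Subgroup.mem_center_iff.mp (hYZ (φ g).2) h).symm
    simp only [QuotientGroup.mk_mul, map_mul, Subgroup.coe_mul, mul_assoc]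
    rw [← mul_assoc (φ g : G) h, hcomm, mul_assoc]

@[simp]
theorem ofCentralHom_apply [X.Normal] (hYZ : Y ≤ Subgroup.center G) (hYX : Y ≤ X)
    (φ : G ⧸ X →* Y) (g : G) : ofCentralHom hYZ hYX φ g = g * φ g :=
  rfl

def quotientDisplacement [X.Normal] (hYZ : Y ≤ Subgroup.center G) (α : MulAut G)
    (hαX : ∀ x ∈ X, α x = x) (hα : ∀ g, g⁻¹ * α g ∈ Y) : G ⧸ X →* Y :=
  QuotientGroup.lift X (displacement hYZ α hα) fun x hx => displacement_eq_one hYZ α hα (hαX x hx)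

@[simp]
theorem coe_quotientDisplacement_mk [X.Normal] (hYZ : Y ≤ Subgroup.center G) (α : MulAut G)
    (hαX : ∀ x ∈ X, α x = x) (hα : ∀ g, g⁻¹ * α g ∈ Y) (g : G) :
    (quotientDisplacement hYZ α hαX hα g : G) = g⁻¹ * α g :=
  rfl

def fixingEquivHom [X.Normal] [IsMulCommutative Y] (hYZ : Y ≤ Subgroup.center G)
    (hYX : Y ≤ X) (S : Subgroup (MulAut G))
    (hS : ∀ α : MulAut G, α ∈ S ↔ (∀ x ∈ X, α x = x) ∧ ∀ g : G, g⁻¹ * α g ∈ Y) :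
    S ≃* (G ⧸ X →* Y) where
  toFun α := quotientDisplacement hYZ α ((hS α).1 α.2).1 ((hS α).1 α.2).2
  invFun φ := ⟨ofCentralHom hYZ hYX φ, (hS _).2
    ⟨fun x hx => by simp [(QuotientGroup.eq_one_iff x).mpr hx], fun g => by simp⟩⟩
  left_inv α := Subtype.ext (MulEquiv.ext fun g => by simp)
  right_inv φ := by ext g; simp
  map_mul' α β := by
    ext g
    exact inv_mul_mul_apply α β g (((hS α).1 α.2).1 _ (hYX (((hS β).1 β.2).2 g)))

end MulAut

/-- Let `Y` be a central subgroup of `G` contained in a normal subgroup `X`.  The group `S`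
of automorphisms of `G` that restrict to the identity on `X` and induce the identity on
`G/Y` is isomorphic to `Hom(G/X, Y)`. -/
theorem stmt_2 (G : Type*) [Group G] (X Y : Subgroup G) [X.Normal] [IsMulCommutative Y]
    (hYZ : Y ≤ Subgroup.center G) (hYX : Y ≤ X)
    (S : Subgroup (MulAut G))
    (hS : ∀ α : MulAut G, α ∈ S ↔ (∀ x ∈ X, α x = x) ∧ ∀ g : G, g⁻¹ * α g ∈ Y) :
    Nonempty (S ≃* ((G ⧸ X) →* Y)) :=
  ⟨MulAut.fixingEquivHom hYZ hYX S hS⟩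
end

section
/- Let G be a group and let C* denote the group of central automorphisms of G that fix the center Z(G) elementwise. Then C* is isomorphic to Hom(G/Z(G), Z(G)). -/
open scoped IsMulCommutative

/-!
A homomorphism `φ : G/Z(G) → Z(G)` twists the identity into the endomorphism `g ↦ g φ(gZ)`.
Since `φ` takes central values, which `φ` itself kills, these twists compose by multiplying the
`φ`'s, so `φ ↦ (g ↦ g φ(gZ))` is an injective homomorphism `Hom(G/Z(G), Z(G)) → Aut(G)`. Its
image is exactly `C*`: an automorphism `α` in `C*` is recovered from `g ↦ g⁻¹ α(g)`, a
homomorphism `G → Z(G)` that vanishes on `Z(G)`.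
-/

section

open Subgroup

variable {G : Type*} [Group G]

def centralEndo (φ : G ⧸ center G →* center G) : G →* G where
  toFun g := g * φ g
  map_one' := by simp
  map_mul' g h := by
    simp only [QuotientGroup.mk_mul, map_mul, coe_mul, mul_assoc, mul_right_inj]
    rw [← mul_assoc, ← mul_assoc, mem_center_iff.1 (φ g).2 h]

@[simp]
theorem centralEndo_apply (φ : G ⧸ center G →* center G) (g : G) :
    centralEndo φ g = g * φ g :=
  rfl

theorem centralEndo_one : centralEndo (1 : G ⧸ center G →* center G) = MonoidHom.id G := by
  ext g
  simp

theorem centralEndo_mul (φ ψ : G ⧸ center G →* center G) :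
    centralEndo (φ * ψ) = (centralEndo φ).comp (centralEndo ψ) := by
  ext g
  have hψ : ((ψ g : G) : G ⧸ center G) = 1 := (QuotientGroup.eq_one_iff _).2 (ψ g).2
  simp only [centralEndo_apply, MonoidHom.mul_apply, MonoidHom.comp_apply, QuotientGroup.mk_mul,
    hψ, mul_one]
  rw [mul_comm (φ _), coe_mul, mul_assoc]

def centralMulAut (φ : G ⧸ center G →* center G) : MulAut G :=
  (centralEndo φ).toMulEquiv (centralEndo φ⁻¹)
    (by rw [← centralEndo_mul, inv_mul_cancel, centralEndo_one])
    (by rw [← centralEndo_mul, mul_inv_cancel, centralEndo_one])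

@[simp]
theorem centralMulAut_apply (φ : G ⧸ center G →* center G) (g : G) :
    centralMulAut φ g = g * φ g :=
  rfl

def centralMulAutHom : (G ⧸ center G →* center G) →* MulAut G where
  toFun := centralMulAut
  map_one' := by ext g; simp
  map_mul' φ ψ := MulEquiv.ext fun g => DFunLike.congr_fun (centralEndo_mul φ ψ) g

theorem centralMulAutHom_injective :
    Function.Injective (centralMulAutHom : (G ⧸ center G →* center G) →* MulAut G) := by
  intro φ ψ h
  ext g
  simpa [centralMulAutHom] using DFunLike.congr_fun h g

def centralDisplacement (f : G →* G) (hf : ∀ g, g⁻¹ * f g ∈ center G) : G →* center G where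
  toFun g := ⟨g⁻¹ * f g, hf g⟩
  map_one' := by ext; simp
  map_mul' g h := by
    ext
    simp only [map_mul, mul_inv_rev, coe_mul, mul_assoc]
    rw [← mul_assoc g⁻¹, ← mul_assoc h⁻¹, mem_center_iff.1 (hf g) h⁻¹, mul_assoc, mul_assoc]

theorem mem_range_centralMulAutHom_iff (α : MulAut G) :
    α ∈ (centralMulAutHom : (G ⧸ center G →* center G) →* MulAut G).range ↔
      (∀ g : G, g⁻¹ * α g ∈ center G) ∧ ∀ z ∈ center G, α z = z := by
  constructor
  · rintro ⟨φ, rfl⟩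
    refine ⟨fun g => ?_, fun z hz => ?_⟩
    · simp [centralMulAutHom]
    · simp [centralMulAutHom, (QuotientGroup.eq_one_iff z).2 hz]
  · rintro ⟨hα, hfix⟩
    let d := centralDisplacement α.toMonoidHom hα
    have hd : center G ≤ d.ker := fun z hz => by
      ext
      simp [d, centralDisplacement, hfix z hz]
    refine ⟨QuotientGroup.lift (center G) d hd, MulEquiv.ext fun g => ?_⟩
    simp [centralMulAutHom, d, centralDisplacement]

end

/-- The group `C*` of central automorphisms of `G` fixing the center elementwise is
isomorphic to `Hom(G/Z(G), Z(G))`. -/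
theorem stmt_3 (G : Type*) [Group G]
    (Cstar : Subgroup (MulAut G))
    (hC : ∀ α : MulAut G, α ∈ Cstar ↔
      (∀ g : G, g⁻¹ * α g ∈ Subgroup.center G) ∧ ∀ z ∈ Subgroup.center G, α z = z) :
    Nonempty (Cstar ≃* ((G ⧸ Subgroup.center G) →* Subgroup.center G)) := by
  have hrange : centralMulAutHom.range = Cstar := by
    ext α
    rw [mem_range_centralMulAutHom_iff, hC]
  exact ⟨((MonoidHom.ofInjective centralMulAutHom_injective).trans
    (MulEquiv.subgroupCongr hrange)).symm⟩
end

section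
/- Let G be a finitely generated group, M and N normal subgroups of G with M ≤ Z(G) ≤ N and G/Z(G) finite. If the subgroup Aut_N^M(G) of automorphisms of G that fix N elementwise and induce the identity on G/M equals Inn(G), then G is nilpotent of class 2, N = Z(G), and G' ≤ M. -/
/-! Every inner automorphism lies in `Aut_N^M(G)`: conjugation by `k` fixing `N` pointwise says
that `k` centralises `N`, and `g⁻¹ (k g k⁻¹) ∈ M` says that the commutators of `G` lie in `M`. -/

section

variable {G : Type*} [Group G]

theorem le_center_of_forall_conj_apply_eq {N : Subgroup G}
    (h : ∀ k : G, ∀ n ∈ N, MulAut.conj k n = n) : N ≤ Subgroup.center G :=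
  fun n hn => Subgroup.mem_center_iff.2 fun k => mul_inv_eq_iff_eq_mul.mp (h k n hn)

theorem commutator_le_of_forall_inv_mul_conj_mem {M : Subgroup G}
    (h : ∀ k g : G, g⁻¹ * MulAut.conj k g ∈ M) : commutator G ≤ M := by
  rw [commutator_def, Subgroup.commutator_le]
  intro g _ k _
  simpa [commutatorElement_def, MulAut.conj_apply, mul_assoc] using h k g⁻¹

end

theorem stmt_4_general (G : Type*) [Group G]
    (M N : Subgroup G)
    (hM : M ≤ Subgroup.center G) (hN : Subgroup.center G ≤ N)
    (S : Subgroup (MulAut G))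
    (hS : ∀ α : MulAut G, α ∈ S ↔ (∀ n ∈ N, α n = n) ∧ ∀ g : G, g⁻¹ * α g ∈ M)
    (heq : S = (MulAut.conj : G →* MulAut G).range) :
    commutator G ≤ Subgroup.center G ∧ N = Subgroup.center G ∧ commutator G ≤ M := by
  have hInn (k : G) : (∀ n ∈ N, MulAut.conj k n = n) ∧ ∀ g : G, g⁻¹ * MulAut.conj k g ∈ M :=
    (hS _).1 (heq ▸ ⟨k, rfl⟩)
  have hGM : commutator G ≤ M :=
    commutator_le_of_forall_inv_mul_conj_mem fun k => (hInn k).2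
  exact ⟨hGM.trans hM,
    le_antisymm (le_center_of_forall_conj_apply_eq fun k => (hInn k).1) hN, hGM⟩

/-- Let `G` be a finitely generated non-abelian group, `M ≤ Z(G) ≤ N` normal subgroups with
`G/Z(G)` finite.  If the group `Aut_N^M(G)` of automorphisms fixing `N` elementwise and
inducing the identity on `G/M` equals `Inn(G)`, then `G` is nilpotent of class 2,
`N = Z(G)` and `G' ≤ M`. -/
theorem stmt_4 (G : Type*) [Group G] [Group.FG G]
    (hnab : ∃ a b : G, a * b ≠ b * a)
    (M N : Subgroup G) [M.Normal] [N.Normal]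
    (hM : M ≤ Subgroup.center G) (hN : Subgroup.center G ≤ N)
    [Finite (G ⧸ Subgroup.center G)]
    (S : Subgroup (MulAut G))
    (hS : ∀ α : MulAut G, α ∈ S ↔ (∀ n ∈ N, α n = n) ∧ ∀ g : G, g⁻¹ * α g ∈ M)
    (heq : S = (MulAut.conj : G →* MulAut G).range) :
    commutator G ≤ Subgroup.center G ∧ N = Subgroup.center G ∧ commutator G ≤ M :=
  stmt_4_general G M N hM hN S hS heq
end

section
/- Let G be a finitely generated nilpotent group of class 2 whose center Z(G) is infinite cyclic. Then the group C* of central automorphisms fixing Z(G) elementwise is isomorphic to Inn(G). -/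
/-!
For any group `G`, a central automorphism `α` fixing `Z(G)` pointwise is determined by the
homomorphism `g ↦ g⁻¹ α(g)` from `G` to `Z(G)`, which factors through `G/Z(G)`; conversely every
`f : G/Z(G) → Z(G)` gives such an automorphism `g ↦ g f(g)`. So `C* ≅ Hom(G/Z(G), Z(G))`.
In class 2, `⁅g ^ n, x⁆ = ⁅g, x⁆ ^ n`, so torsion-freeness of `Z(G) ≅ ℤ` passes to the abelian
group `G/Z(G)`, which is therefore free of finite rank and isomorphic to its dual
`Hom(G/Z(G), ℤ)`. Finally `G/Z(G) ≅ Inn(G)`.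
-/

open Subgroup
open scoped commutatorElement IsMulCommutative

theorem commutatorElement_pow_left {G : Type*} [Group G] {g x : G} (h : Commute ⁅g, x⁆ g)
    (n : ℕ) : ⁅g ^ n, x⁆ = ⁅g, x⁆ ^ n := by
  induction n with
  | zero => simp
  | succ n ih =>
    calc ⁅g ^ (n + 1), x⁆ = g * ⁅g ^ n, x⁆ * x * g⁻¹ * x⁻¹ := by
          simp only [commutatorElement_def]; group
      _ = ⁅g, x⁆ ^ n * ⁅g, x⁆ := by
          rw [ih, ← (h.pow_left n).eq, commutatorElement_def]; group
      _ = ⁅g, x⁆ ^ (n + 1) := (pow_succ _ n).symm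

theorem MulAut.ker_conj (G : Type*) [Group G] :
    (MulAut.conj : G →* MulAut G).ker = center G := by
  ext g
  simp only [MonoidHom.mem_ker, MulEquiv.ext_iff, MulAut.conj_apply, MulAut.one_apply,
    mem_center_iff]
  exact forall_congr' fun x => by rw [mul_inv_eq_iff_eq_mul, eq_comm]

section ClassTwo

variable {G : Type*} [Group G]

theorem commutatorElement_mem_center (hG : commutator G ≤ center G) (g x : G) :
    ⁅g, x⁆ ∈ center G :=
  hG (commutator_mem_commutator (mem_top g) (mem_top x))

theorem mem_center_of_pow_mem_center [IsMulTorsionFree (center G)]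
    (hG : commutator G ≤ center G) {g : G} {n : ℕ} (hn : n ≠ 0) (hgn : g ^ n ∈ center G) :
    g ∈ center G := by
  refine mem_center_iff.mpr fun x => ?_
  have hc := commutatorElement_mem_center hG g x
  have hpow : (⟨⁅g, x⁆, hc⟩ : center G) ^ n = 1 := Subtype.ext <| by
    rw [SubgroupClass.coe_pow, ← commutatorElement_pow_left (mem_center_iff.mp hc g).symm,
      commutatorElement_eq_one_iff_mul_comm.mpr (mem_center_iff.mp hgn x).symm]
    rfl
  have := congrArg Subtype.val ((pow_eq_one_iff_left hn).mp hpow)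
  exact (commutatorElement_eq_one_iff_mul_comm.mp this).symm

theorem isMulTorsionFree_quotient_center [IsMulTorsionFree (center G)]
    (hG : commutator G ≤ center G) : IsMulTorsionFree (G ⧸ center G) := by
  have : IsMulCommutative (G ⧸ center G) :=
    Subgroup.Normal.quotient_commutative_iff_commutator_le.mpr hG
  refine IsMulTorsionFree.of_not_isOfFinOrder fun q hq hfin => hq ?_
  obtain ⟨n, hn, hqn⟩ := isOfFinOrder_iff_pow_eq_one.mp hfin
  induction q using QuotientGroup.induction_on with
  | H g =>
    rw [← QuotientGroup.mk_pow, QuotientGroup.eq_one_iff] at hqn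
    exact (QuotientGroup.eq_one_iff g).mpr (mem_center_of_pow_mem_center hG hn.ne' hqn)

end ClassTwo

section CentralAutomorphisms

variable {G : Type*} [Group G]

def centralAutOfHom (f : G ⧸ center G →* center G) : MulAut G where
  toFun g := g * f g
  invFun g := g * (f g)⁻¹
  left_inv g := by
    simp [QuotientGroup.mk_mul_of_mem g (f g).2]
  right_inv g := by
    simp [QuotientGroup.mk_mul_of_mem g (inv_mem (f g).2)]
  map_mul' g h := by
    simp only [QuotientGroup.mk_mul, map_mul, Subgroup.coe_mul]
    rw [mul_assoc g h, ← mul_assoc h, mem_center_iff.mp (f g).2 h]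
    group

def homToCenterOfCentralAut (α : MulAut G) (hα : ∀ g, g⁻¹ * α g ∈ center G) : G →* center G where
  toFun g := ⟨g⁻¹ * α g, hα g⟩
  map_one' := by ext; simp
  map_mul' g h := by
    ext
    calc (g * h)⁻¹ * α (g * h) = h⁻¹ * (g⁻¹ * α g) * α h := by rw [map_mul]; group
      _ = g⁻¹ * α g * (h⁻¹ * α h) := by rw [mem_center_iff.mp (hα g) h⁻¹]; group

def homOfCentralAut (α : MulAut G) (hα : ∀ g, g⁻¹ * α g ∈ center G)
    (hfix : ∀ z ∈ center G, α z = z) : G ⧸ center G →* center G :=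
  QuotientGroup.lift _ (homToCenterOfCentralAut α hα) fun z hz => by
    ext; simp [homToCenterOfCentralAut, hfix z hz]

def centralAutEquivHom (C : Subgroup (MulAut G))
    (hC : ∀ α : MulAut G, α ∈ C ↔
      (∀ g : G, g⁻¹ * α g ∈ center G) ∧ ∀ z ∈ center G, α z = z) :
    C ≃* (G ⧸ center G →* center G) where
  toFun α := homOfCentralAut α.1 ((hC _).1 α.2).1 ((hC _).1 α.2).2
  invFun f := ⟨centralAutOfHom f, (hC _).2
    ⟨fun g => by simp [centralAutOfHom], fun z hz => by
      simp [centralAutOfHom, (QuotientGroup.eq_one_iff z).mpr hz]⟩⟩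
  left_inv α := by
    ext g
    simp [centralAutOfHom, homOfCentralAut, homToCenterOfCentralAut]
  right_inv f := by
    ext g
    simp [centralAutOfHom, homOfCentralAut, homToCenterOfCentralAut]
  map_mul' α β := by
    ext g
    obtain ⟨hβ, -⟩ := (hC _).1 β.2
    obtain ⟨-, hαfix⟩ := (hC _).1 α.2
    have : α.1 (β.1 g) = α.1 g * (g⁻¹ * β.1 g) := by
      rw [← hαfix _ (hβ g), ← map_mul, mul_inv_cancel_left]
    simp [homOfCentralAut, homToCenterOfCentralAut, this, mul_assoc]

end CentralAutomorphisms

noncomputable def monoidHomMultiplicativeIntEquiv (Q : Type*) [CommGroup Q] [Group.FG Q]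
    [IsMulTorsionFree Q] : (Q →* Multiplicative ℤ) ≃* Q :=
  have : Module.Finite ℤ (Additive Q) := Module.Finite.iff_addGroup_fg.mpr inferInstance
  let b := Module.Free.chooseBasis ℤ (Additive Q)
  MonoidHom.toAdditiveLeftMulEquiv.trans <|
    (((addMonoidHomLequivInt ℤ).trans b.toDualEquiv.symm).toAddEquiv.toMultiplicative).trans
      (MulEquiv.multiplicativeAdditive Q)

noncomputable def quotientCenterEquivRangeConj (G : Type*) [Group G] :
    G ⧸ center G ≃* (MulAut.conj : G →* MulAut G).range :=
  (QuotientGroup.quotientMulEquivOfEq (MulAut.ker_conj G).symm).trans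
    (QuotientGroup.quotientKerEquivRange _)

theorem stmt_6_general (G : Type*) [Group G] [Group.FG G]
    (hc2 : commutator G ≤ Subgroup.center G)
    (hZ : Nonempty (Subgroup.center G ≃* Multiplicative ℤ))
    (Cstar : Subgroup (MulAut G))
    (hC : ∀ α : MulAut G, α ∈ Cstar ↔
      (∀ g : G, g⁻¹ * α g ∈ Subgroup.center G) ∧ ∀ z ∈ Subgroup.center G, α z = z) :
    Nonempty (Cstar ≃* (MulAut.conj : G →* MulAut G).range) := by
  obtain ⟨e⟩ := hZ
  have : IsMulTorsionFree (center G) := e.injective.isMulTorsionFree e.toMonoidHom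
  have : IsMulCommutative (G ⧸ center G) :=
    Subgroup.Normal.quotient_commutative_iff_commutator_le.mpr hc2
  have : IsMulTorsionFree (G ⧸ center G) := isMulTorsionFree_quotient_center hc2
  exact ⟨(centralAutEquivHom Cstar hC).trans <| (MulEquiv.monoidHomCongrRight e).trans <|
    (monoidHomMultiplicativeIntEquiv _).trans (quotientCenterEquivRangeConj G)⟩

/-- Let `G` be a finitely generated nilpotent group of class 2 with infinite cyclic center.
Then `C*`, the group of central automorphisms fixing the center elementwise, is isomorphic
to `Inn(G)`. -/
theorem stmt_6 (G : Type*) [Group G] [Group.FG G]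
    (hnab : ∃ a b : G, a * b ≠ b * a)
    (hc2 : commutator G ≤ Subgroup.center G)
    (hZ : Nonempty (Subgroup.center G ≃* Multiplicative ℤ))
    (Cstar : Subgroup (MulAut G))
    (hC : ∀ α : MulAut G, α ∈ Cstar ↔
      (∀ g : G, g⁻¹ * α g ∈ Subgroup.center G) ∧ ∀ z ∈ Subgroup.center G, α z = z) :
    Nonempty (Cstar ≃* (MulAut.conj : G →* MulAut G).range) :=
  stmt_6_general G hc2 hZ Cstar hC
end

section
/- Let G be a group with G* ≤ L(G), where G* is the autocommutator subgroup and L(G) is the absolute center (i.e., G is autonilpotent of class at most 2). Then the exponent of G/L(G) equals the exponent of G*. -/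
/-! Write `c = g⁻¹ α(g)`. Since `c ∈ L(G) ≤ Z(G)`, it commutes with `g`, so
`α(gⁿ) = (g c)ⁿ = gⁿ cⁿ`. Hence `gⁿ ∈ L(G)` iff `cⁿ = 1` for every `α`: the `n` killing `G/L(G)`
are exactly those killing all generators of `G*`, and since `G*` is central these are the `n`
killing `G*`. -/

/-- The absolute center `L(G) = {g ∈ G : α(g) = g for all α ∈ Aut(G)}`. -/
def absoluteCenter (G : Type*) [Group G] : Subgroup G where
  carrier := {g | ∀ α : MulAut G, α g = g}
  one_mem' := fun α => map_one α
  mul_mem' := by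
    intro a b ha hb α
    rw [map_mul, ha α, hb α]
  inv_mem' := by
    intro a ha α
    rw [map_inv, ha α]

instance absoluteCenter_normal (G : Type*) [Group G] : (absoluteCenter G).Normal := by
  constructor
  intro g hg n
  have h : n * g * n⁻¹ = g := by simpa using hg (MulAut.conj n)
  rw [h]; exact hg

/-- The autocommutator subgroup `G* = ⟨g⁻¹α(g) : g ∈ G, α ∈ Aut(G)⟩`. -/
def autocommutator (G : Type*) [Group G] : Subgroup G :=
  Subgroup.closure {x : G | ∃ (g : G) (α : MulAut G), x = g⁻¹ * α g}

theorem Monoid.exponent_eq_of_forall_pow_eq_one_iff {M N : Type*} [Monoid M] [Monoid N]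
    (h : ∀ n : ℕ, (∀ m : M, m ^ n = 1) ↔ ∀ x : N, x ^ n = 1) :
    Monoid.exponent M = Monoid.exponent N := by
  apply Nat.dvd_antisymm
  · rw [Monoid.exponent_dvd_iff_forall_pow_eq_one, h]
    exact Monoid.pow_exponent_eq_one
  · rw [Monoid.exponent_dvd_iff_forall_pow_eq_one, ← h]
    exact Monoid.pow_exponent_eq_one

theorem QuotientGroup.forall_pow_eq_one_iff {G : Type*} [Group G] (N : Subgroup G) [N.Normal]
    (n : ℕ) : (∀ q : G ⧸ N, q ^ n = 1) ↔ ∀ g : G, g ^ n ∈ N := by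
  simp only [QuotientGroup.mk_surjective.forall, ← QuotientGroup.mk_pow,
    QuotientGroup.eq_one_iff]

theorem Subgroup.pow_eq_one_of_mem_closure_of_subset_center {G : Type*} [Group G] {s : Set G}
    (hs : s ⊆ Subgroup.center G) {n : ℕ} (hs₁ : ∀ x ∈ s, x ^ n = 1) {x : G}
    (hx : x ∈ Subgroup.closure s) : x ^ n = 1 := by
  induction hx using Subgroup.closure_induction with
  | mem x hx => exact hs₁ x hx
  | one => exact one_pow n
  | mul a b ha _ hpa hpb =>
    have hab : Commute a b := (Subgroup.mem_center_iff.1 ((Subgroup.closure_le _).2 hs ha) b).symm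
    rw [hab.mul_pow, hpa, hpb, one_mul]
  | inv a _ hpa => rw [inv_pow, hpa, inv_one]

section Autocommutator

variable {G : Type*} [Group G]

theorem absoluteCenter_le_center : absoluteCenter G ≤ Subgroup.center G := by
  intro z hz
  rw [Subgroup.mem_center_iff]
  intro g
  have hconj : g * z * g⁻¹ = z := by simpa using hz (MulAut.conj g)
  rw [← hconj, inv_mul_cancel_right, hconj]

theorem inv_mul_apply_mem_autocommutator (g : G) (α : MulAut G) :
    g⁻¹ * α g ∈ autocommutator G :=
  Subgroup.subset_closure ⟨g, α, rfl⟩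

variable (h : autocommutator G ≤ absoluteCenter G)
include h

theorem map_pow_eq_pow_mul_pow_of_autocommutator_le (g : G) (α : MulAut G) (n : ℕ) :
    α (g ^ n) = g ^ n * (g⁻¹ * α g) ^ n := by
  have hcomm : Commute g (g⁻¹ * α g) :=
    Subgroup.mem_center_iff.1
      (absoluteCenter_le_center (h (inv_mul_apply_mem_autocommutator g α))) g
  rw [map_pow, ← hcomm.mul_pow, mul_inv_cancel_left]

theorem pow_mem_absoluteCenter_iff (g : G) (n : ℕ) :
    g ^ n ∈ absoluteCenter G ↔ ∀ α : MulAut G, (g⁻¹ * α g) ^ n = 1 := by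
  refine forall_congr' fun α => ?_
  rw [map_pow_eq_pow_mul_pow_of_autocommutator_le h, mul_eq_left]

theorem forall_pow_eq_one_autocommutator_iff (n : ℕ) :
    (∀ x : autocommutator G, x ^ n = 1) ↔ ∀ (g : G) (α : MulAut G), (g⁻¹ * α g) ^ n = 1 := by
  simp only [Subtype.forall, Subtype.ext_iff, Subgroup.coe_pow, Subgroup.coe_one]
  refine ⟨fun hx g α => hx _ (inv_mul_apply_mem_autocommutator g α), fun hgen x hx => ?_⟩
  refine Subgroup.pow_eq_one_of_mem_closure_of_subset_center ?_ ?_ hx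
  · rintro _ ⟨g, α, rfl⟩
    exact absoluteCenter_le_center (h (inv_mul_apply_mem_autocommutator g α))
  · rintro _ ⟨g, α, rfl⟩
    exact hgen g α

end Autocommutator

/-- If `G* ≤ L(G)` (i.e. `G` is autonilpotent of class at most 2), then the exponent of
`G/L(G)` equals the exponent of `G*`. -/
theorem stmt_11 (G : Type*) [Group G] (h : autocommutator G ≤ absoluteCenter G) :
    Monoid.exponent (G ⧸ absoluteCenter G) = Monoid.exponent (autocommutator G) := by
  refine Monoid.exponent_eq_of_forall_pow_eq_one_iff fun n => ?_
  rw [QuotientGroup.forall_pow_eq_one_iff, forall_pow_eq_one_autocommutator_iff h]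
  exact forall_congr' fun g => pow_mem_absoluteCenter_iff h g n
end

section
/- Let G be a finite p-group, nilpotent of class 2, with Z(G) cyclic. Then C*, the group of central automorphisms fixing the center elementwise, equals Inn(G). -/
/-!
An automorphism `α` that moves every element by a central factor and fixes `Z(G)` pointwise
is determined by the homomorphism `gZ(G) ↦ g⁻¹ α(g)` from `G/Z(G)` to `Z(G)`. Since `G/Z(G)` is
abelian and `Z(G)` is cyclic, there are at most `|G/Z(G)| = |Inn(G)|` such homomorphisms, while
class two makes every inner automorphism central and trivial on `Z(G)`.
-/

open Subgroup
open scoped IsMulCommutative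

theorem card_monoidHom_le_of_isCyclic (A C : Type*) [CommGroup A] [Finite A] [Group C]
    [Finite C] [IsCyclic C] : Nat.card (A →* C) ≤ Nat.card A := by
  have : NeZero (Nat.card C) := ⟨Nat.card_pos.ne'⟩
  have : NeZero (Monoid.exponent A : ℂ) :=
    ⟨Nat.cast_ne_zero.mpr Monoid.exponent_ne_zero_of_finite⟩
  -- `C` embeds into `ℂˣ` as the group of `|C|`-th roots of unity.
  let ι : C →* ℂˣ := (rootsOfUnity (Nat.card C) ℂ).subtype.comp
    (mulEquivOfCyclicCardEq (Complex.card_rootsOfUnity (Nat.card C)).symm).toMonoidHom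
  have hι : Function.Injective ι := Subtype.val_injective.comp (MulEquiv.injective _)
  have hcard := CommGroup.card_monoidHom_of_hasEnoughRootsOfUnity A ℂ
  have : Finite (A →* ℂˣ) := Nat.finite_of_card_ne_zero (hcard ▸ Nat.card_pos.ne')
  calc Nat.card (A →* C) ≤ Nat.card (A →* ℂˣ) :=
        Nat.card_le_card_of_injective (ι.comp ·) fun f g h ↦
          MonoidHom.ext fun a ↦ hι (DFunLike.congr_fun h a)
    _ = Nat.card A := hcard

namespace MulAut

variable {G : Type*} [Group G]

open scoped commutatorElement in
theorem inv_mul_conj_mem_center (hG : commutator G ≤ center G) (g x : G) :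
    x⁻¹ * conj g x ∈ center G := by
  have hx : x⁻¹ * conj g x = ⁅x⁻¹, g⁆ := by simp only [conj_apply]; group
  exact hx ▸ hG (commutator_mem_commutator (mem_top _) (mem_top _))

theorem conj_apply_of_mem_center {z : G} (hz : z ∈ center G) (g : G) : conj g z = z := by
  rw [conj_apply, mem_center_iff.mp hz g, mul_inv_cancel_right]

theorem ker_conj_s17 : (conj : G →* MulAut G).ker = center G := by
  ext g
  rw [MonoidHom.mem_ker, mem_center_iff, MulEquiv.ext_iff]
  exact forall_congr' fun _ ↦ by rw [conj_apply, one_apply, mul_inv_eq_iff_eq_mul, eq_comm]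

theorem card_range_conj : Nat.card (conj : G →* MulAut G).range = Nat.card (G ⧸ center G) := by
  rw [← ker_conj_s17]
  exact Nat.card_congr (QuotientGroup.quotientKerEquivRange _).toEquiv.symm

def centralHom (α : MulAut G) (hα : ∀ g, g⁻¹ * α g ∈ center G) : G →* center G where
  toFun g := ⟨g⁻¹ * α g, hα g⟩
  map_one' := by ext; simp
  map_mul' g h := by
    ext
    have hcomm := mem_center_iff.mp (hα g) h⁻¹
    simp only [map_mul, mul_inv_rev]
    calc h⁻¹ * g⁻¹ * (α g * α h) = h⁻¹ * (g⁻¹ * α g) * α h := by group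
      _ = g⁻¹ * α g * (h⁻¹ * α h) := by rw [hcomm]; group

@[simp]
theorem coe_centralHom_apply (α : MulAut G) (hα : ∀ g, g⁻¹ * α g ∈ center G) (g : G) :
    (centralHom α hα g : G) = g⁻¹ * α g :=
  rfl

theorem centralHom_injective {α β : MulAut G} (hα : ∀ g, g⁻¹ * α g ∈ center G)
    (hβ : ∀ g, g⁻¹ * β g ∈ center G) (h : centralHom α hα = centralHom β hβ) : α = β :=
  MulEquiv.ext fun g ↦ mul_left_cancel (congrArg Subtype.val (DFunLike.congr_fun h g))

theorem center_le_ker_centralHom {α : MulAut G} (hα : ∀ g, g⁻¹ * α g ∈ center G)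
    (hfix : ∀ z ∈ center G, α z = z) : center G ≤ (centralHom α hα).ker := fun z hz ↦ by
  ext
  simp [hfix z hz]

theorem card_le_card_monoidHom_quotient_center [Finite G] (S : Subgroup (MulAut G))
    (hS : ∀ α ∈ S, (∀ g, g⁻¹ * α g ∈ center G) ∧ ∀ z ∈ center G, α z = z) :
    Nat.card S ≤ Nat.card (G ⧸ center G →* center G) := by
  let Φ : S → (G ⧸ center G →* center G) := fun α ↦
    QuotientGroup.lift _ _ (center_le_ker_centralHom (hS α α.2).1 (hS α α.2).2)
  have : Finite (G ⧸ center G →* center G) := Finite.of_injective _ DFunLike.coe_injective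
  refine Nat.card_le_card_of_injective Φ fun α β h ↦ Subtype.ext ?_
  refine centralHom_injective (hS α α.2).1 (hS β β.2).1 (MonoidHom.ext fun g ↦ ?_)
  exact DFunLike.congr_fun h (g : G ⧸ center G)

end MulAut

theorem stmt_17_general (G : Type*) [Group G] [Finite G]
    (hc2 : commutator G ≤ Subgroup.center G) (hcyc : IsCyclic (Subgroup.center G))
    (Cstar : Subgroup (MulAut G))
    (hC : ∀ α : MulAut G, α ∈ Cstar ↔
      (∀ g : G, g⁻¹ * α g ∈ Subgroup.center G) ∧ ∀ z ∈ Subgroup.center G, α z = z) :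
    Cstar = (MulAut.conj : G →* MulAut G).range := by
  have hInn : (MulAut.conj : G →* MulAut G).range ≤ Cstar := by
    rintro _ ⟨g, rfl⟩
    exact (hC _).2 ⟨fun x ↦ MulAut.inv_mul_conj_mem_center hc2 g x,
      fun z hz ↦ MulAut.conj_apply_of_mem_center hz g⟩
  have : IsMulCommutative (G ⧸ center G) := Normal.quotient_commutative_iff_commutator_le.mpr hc2
  refine (eq_of_le_of_card_ge hInn ?_).symm
  calc Nat.card Cstar ≤ Nat.card (G ⧸ center G →* center G) :=
        MulAut.card_le_card_monoidHom_quotient_center Cstar fun α ↦ (hC α).1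
    _ ≤ Nat.card (G ⧸ center G) := card_monoidHom_le_of_isCyclic _ _
    _ = Nat.card (MulAut.conj : G →* MulAut G).range := MulAut.card_range_conj.symm

/-- Let `G` be a finite `p`-group, nilpotent of class 2 (`1 ≠ G' ≤ Z(G)`), with `Z(G)`
cyclic.  Then `C*`, the group of central automorphisms fixing the center elementwise,
equals `Inn(G)`. -/
theorem stmt_17 (p : ℕ) [Fact p.Prime] (G : Type*) [Group G] [Finite G]
    (hp : IsPGroup p G) (hne : commutator G ≠ ⊥)
    (hc2 : commutator G ≤ Subgroup.center G) (hcyc : IsCyclic (Subgroup.center G))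
    (Cstar : Subgroup (MulAut G))
    (hC : ∀ α : MulAut G, α ∈ Cstar ↔
      (∀ g : G, g⁻¹ * α g ∈ Subgroup.center G) ∧ ∀ z ∈ Subgroup.center G, α z = z) :
    Cstar = (MulAut.conj : G →* MulAut G).range :=
  stmt_17_general G hc2 hcyc Cstar hC
end
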